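/- The strong product C_m ⊠ C_n admits a closed distance magic labeling if and only if (m ≡ 3 (mod 6) and n ≡ 3 (mod 6)) or ({m,n} = {3,x} with x odd). -/

import Mathlib

/-!
The closed neighbourhood of `(i, j)` in `C_m ⊠ C_n` is the `3 × 3` box around it, so after
shifting the labels to `{0, …, mn - 1}` a closed distance magic labelling is an injective array on
the torus all of whose `3 × 3` box sums equal some `k`.

Summing all box sums counts every label nine times, so `2k = 9(mn + 1)` for the original labels
and `mn` is odd. If `3 ∤ n`, the sums `T(i, j)` of three vertically consecutive labels satisfy
`T(i, j - 1) + T(i, j) + T(i, j + 1) = k`, so they are `3`-periodic in `j`, hence constant in `j`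
and equal to `k / 3`; then the labels are `3`-periodic in `i`, and injectivity forces `m = 3`.

Conversely, a label `A + m B` with digits `A < m`, `B < n` that determine the cell is magic as soon
as both digits have constant box sums. For `m = 3` take `A = i` and `B` the entry of a `3 × n`
Kotzig array (rows are permutations of `{0, …, n - 1}`, columns have equal sums). For
`m ≡ n ≡ 3 (mod 6)`, `A` combines `i mod 3` with the Kotzig row indexed by `j mod 3` evaluated at
the block `i / 3`, and `B` is the same with the roles of `i` and `j` exchanged.
-/

open Finset SimpleGraph

/-- A closed distance magic labeling of a graph `G` on `n` vertices: a bijection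
from the vertices to `{1, …, n}` (encoded via `V ≃ Fin n`, with label `ℓ y + 1`)
such that the sum of labels over every closed neighborhood is the constant `k`. -/
def IsClosedDistanceMagicWith {V : Type*} [Fintype V] [DecidableEq V]
    (G : SimpleGraph V) [DecidableRel G.Adj] (k : ℕ) : Prop :=
  0 < k ∧ ∃ ℓ : V ≃ Fin (Fintype.card V),
    ∀ x : V, ∑ y ∈ insert x (G.neighborFinset x), ((ℓ y : ℕ) + 1) = k

/-- A graph admitting a closed distance magic labeling. -/
def IsClosedDistanceMagic {V : Type*} [Fintype V] [DecidableEq V]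
    (G : SimpleGraph V) [DecidableRel G.Adj] : Prop :=
  ∃ k : ℕ, IsClosedDistanceMagicWith G k

/-- The strong product of two simple graphs. -/
def strongProd {α β : Type*} (G : SimpleGraph α) (H : SimpleGraph β) :
    SimpleGraph (α × β) where
  Adj p q := p ≠ q ∧ (p.1 = q.1 ∨ G.Adj p.1 q.1) ∧ (p.2 = q.2 ∨ H.Adj p.2 q.2)
  symm := ⟨by
    rintro p q ⟨h1, h2, h3⟩
    exact ⟨h1.symm, h2.elim (fun e => Or.inl e.symm) (fun a => Or.inr a.symm),
      h3.elim (fun e => Or.inl e.symm) (fun a => Or.inr a.symm)⟩⟩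
  loopless := ⟨fun p h => h.1 rfl⟩

instance {α β : Type*} [DecidableEq α] [DecidableEq β] (G : SimpleGraph α)
    (H : SimpleGraph β) [DecidableRel G.Adj] [DecidableRel H.Adj] :
    DecidableRel (strongProd G H).Adj := fun p q =>
      show Decidable (p ≠ q ∧ (p.1 = q.1 ∨ G.Adj p.1 q.1) ∧ (p.2 = q.2 ∨ H.Adj p.2 q.2)) from
        instDecidableAnd

namespace SimpleGraph

variable {V : Type*} [Fintype V] [DecidableEq V] (G : SimpleGraph V) [DecidableRel G.Adj]

def closedNbhd (x : V) : Finset V := insert x (G.neighborFinset x)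

variable {G}

lemma mem_closedNbhd {x y : V} : y ∈ G.closedNbhd x ↔ y = x ∨ G.Adj x y := by
  simp [closedNbhd]

lemma mem_closedNbhd_comm {x y : V} : y ∈ G.closedNbhd x ↔ x ∈ G.closedNbhd y := by
  simp only [mem_closedNbhd, G.adj_comm, eq_comm]

lemma card_closedNbhd (x : V) : #(G.closedNbhd x) = G.degree x + 1 :=
  card_insert_of_notMem (G.notMem_neighborFinset_self x)

lemma sum_closedNbhd_add_one {d : ℕ} (hG : G.IsRegularOfDegree d) (f : V → ℕ) (x : V) :
    ∑ y ∈ G.closedNbhd x, (f y + 1) = ∑ y ∈ G.closedNbhd x, f y + (d + 1) := by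
  rw [sum_add_distrib, sum_const, card_closedNbhd, hG.degree_eq, smul_eq_mul, mul_one]

lemma sum_sum_closedNbhd {d : ℕ} (hG : G.IsRegularOfDegree d) (f : V → ℕ) :
    ∑ x, ∑ y ∈ G.closedNbhd x, f y = (d + 1) * ∑ y, f y := by
  rw [sum_comm' (t' := univ) (s' := G.closedNbhd) (fun x y => by simp [mem_closedNbhd_comm]),
    mul_sum]
  simp [card_closedNbhd, hG.degree_eq]

end SimpleGraph

section ClosedDistanceMagic

variable {V : Type*} [Fintype V] [DecidableEq V] {G : SimpleGraph V} [DecidableRel G.Adj]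
  {d : ℕ}

lemma IsClosedDistanceMagicWith.two_mul_eq [Nonempty V] {k : ℕ}
    (h : IsClosedDistanceMagicWith G k) (hG : G.IsRegularOfDegree d) :
    2 * k = (d + 1) * (Fintype.card V + 1) := by
  obtain ⟨-, ℓ, hℓ⟩ := h
  have hlabels : ∑ y, ((ℓ y : ℕ) + 1) = ∑ i ∈ range (Fintype.card V + 1), i := by
    rw [Equiv.sum_comp ℓ (fun i => (i : ℕ) + 1), Fin.sum_univ_eq_sum_range (fun i => i + 1),
      sum_range_succ', add_zero]
  have hcount : Fintype.card V * k = (d + 1) * ∑ i ∈ range (Fintype.card V + 1), i := by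
    rw [← hlabels, ← G.sum_sum_closedNbhd hG]
    simp [SimpleGraph.closedNbhd, hℓ]
  have hgauss := sum_range_id_mul_two (Fintype.card V + 1)
  refine Nat.eq_of_mul_eq_mul_left (Fintype.card_pos (α := V)) ?_
  calc Fintype.card V * (2 * k) = 2 * (Fintype.card V * k) := by ring
    _ = (d + 1) * ((∑ i ∈ range (Fintype.card V + 1), i) * 2) := by rw [hcount]; ring
    _ = Fintype.card V * ((d + 1) * (Fintype.card V + 1)) := by
      rw [hgauss, Nat.add_sub_cancel]; ring

lemma IsClosedDistanceMagic.odd_card [Nonempty V] (h : IsClosedDistanceMagic G)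
    (hG : G.IsRegularOfDegree d) (hd : Even d) : Odd (Fintype.card V) := by
  obtain ⟨k, hk⟩ := h
  have h2k : Even ((d + 1) * (Fintype.card V + 1)) := ⟨k, by rw [← hk.two_mul_eq hG]; ring⟩
  rw [Nat.even_mul, Nat.even_add_one, Nat.even_add_one] at h2k
  exact Nat.not_even_iff_odd.1 (h2k.resolve_left (not_not.2 hd))

lemma isClosedDistanceMagic_iff_exists_injective (hG : G.IsRegularOfDegree d) :
    IsClosedDistanceMagic G ↔ ∃ ℓ : V → ℕ, Function.Injective ℓ ∧
      (∀ x, ℓ x < Fintype.card V) ∧ ∃ k, ∀ x, ∑ y ∈ G.closedNbhd x, ℓ y = k := by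
  constructor
  · rintro ⟨k, -, e, he⟩
    refine ⟨fun x => e x, Fin.val_injective.comp e.injective, fun x => (e x).isLt,
      k - (d + 1), fun x => ?_⟩
    have := he x
    beta_reduce
    rw [← SimpleGraph.closedNbhd, SimpleGraph.sum_closedNbhd_add_one hG] at this
    omega
  · rintro ⟨ℓ, hinj, hlt, k, hk⟩
    have hbij : Function.Bijective fun x => (⟨ℓ x, hlt x⟩ : Fin (Fintype.card V)) :=
      (Fintype.bijective_iff_injective_and_card _).2
        ⟨fun x y h => hinj (Fin.val_eq_of_eq h), (Fintype.card_fin _).symm⟩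
    refine ⟨k + (d + 1), by omega, Equiv.ofBijective _ hbij, fun x => ?_⟩
    rw [← SimpleGraph.closedNbhd]
    exact (SimpleGraph.sum_closedNbhd_add_one hG ℓ x).trans (by rw [hk])

end ClosedDistanceMagic

section StrongProduct

variable {α β : Type*} [Fintype α] [DecidableEq α] [Fintype β] [DecidableEq β]
  {G : SimpleGraph α} {H : SimpleGraph β} [DecidableRel G.Adj] [DecidableRel H.Adj]

lemma closedNbhd_strongProd (x : α × β) :
    (strongProd G H).closedNbhd x = G.closedNbhd x.1 ×ˢ H.closedNbhd x.2 := by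
  ext y
  simp only [SimpleGraph.mem_closedNbhd, mem_product]
  change y = x ∨ (x ≠ y ∧ (x.1 = y.1 ∨ G.Adj x.1 y.1) ∧ (x.2 = y.2 ∨ H.Adj x.2 y.2)) ↔ _
  by_cases hxy : y = x
  · simp [hxy]
  · simp [hxy, Ne.symm hxy, eq_comm]

lemma isRegularOfDegree_strongProd {d e : ℕ} (hG : G.IsRegularOfDegree d)
    (hH : H.IsRegularOfDegree e) : (strongProd G H).IsRegularOfDegree ((d + 1) * (e + 1) - 1) := by
  intro x
  have h := (strongProd G H).card_closedNbhd x
  rw [closedNbhd_strongProd, card_product, G.card_closedNbhd, H.card_closedNbhd,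
    hG.degree_eq, hH.degree_eq] at h
  omega

end StrongProduct

section CycleGraph

variable {m : ℕ}

lemma isRegularOfDegree_cycleGraph (hm : 3 ≤ m) : (cycleGraph m).IsRegularOfDegree 2 := by
  obtain ⟨k, rfl⟩ : ∃ k, m = k + 3 := ⟨m - 3, by omega⟩
  exact fun _ => cycleGraph_degree_three_le

lemma card_closedNbhd_cycleGraph (hm : 3 ≤ m) (i : Fin m) : #((cycleGraph m).closedNbhd i) = 3 := by
  rw [SimpleGraph.card_closedNbhd, (isRegularOfDegree_cycleGraph hm).degree_eq]

lemma closedNbhd_cycleGraph_three (i : Fin 3) : (cycleGraph 3).closedNbhd i = univ := by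
  revert i; decide

variable [NeZero m]

lemma sum_closedNbhd_cycleGraph {M : Type*} [AddCommMonoid M] (hm : 3 ≤ m) (f : Fin m → M)
    (i : Fin m) : ∑ a ∈ (cycleGraph m).closedNbhd i, f a = f (i - 1) + f i + f (i + 1) := by
  obtain ⟨k, rfl⟩ : ∃ k, m = k + 2 := ⟨m - 2, by omega⟩
  have hne : i - 1 ≠ i + 1 := by
    intro h
    have h2 : (2 : Fin (k + 2)) = 0 := by open Fin.CommRing in linear_combination -h
    rw [Fin.ext_iff, Fin.coe_ofNat_eq_mod, Fin.val_zero, Nat.mod_eq_of_lt (by omega)] at h2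
    omega
  rw [SimpleGraph.closedNbhd, sum_insert (SimpleGraph.notMem_neighborFinset_self _ _),
    cycleGraph_neighborFinset, sum_pair hne]
  abel

lemma Fin.val_add_one_mod_of_dvd {d : ℕ} (hm : 2 ≤ m) (hd : d ∣ m) (i : Fin m) :
    (i + 1).val % d = (i.val + 1) % d := by
  rw [Fin.val_add, Nat.mod_mod_of_dvd _ hd, Fin.val_one', Nat.one_mod_eq_one.2 (by omega)]

lemma sum_closedNbhd_cycleGraph_mod_three {M : Type*} [AddCommMonoid M] (hm : 3 ≤ m)
    (h3 : 3 ∣ m) (f : ℕ → M) (i : Fin m) :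
    ∑ a ∈ (cycleGraph m).closedNbhd i, f (a.val % 3) = f 0 + f 1 + f 2 := by
  have hsucc := Fin.val_add_one_mod_of_dvd (by omega) h3 i
  have hpred := Fin.val_add_one_mod_of_dvd (by omega) h3 (i - 1)
  rw [sub_add_cancel] at hpred
  rw [sum_closedNbhd_cycleGraph hm, hsucc]
  obtain h | h | h : i.val % 3 = 0 ∨ i.val % 3 = 1 ∨ i.val % 3 = 2 := by omega
  · rw [show (i - 1).val % 3 = 2 by omega, h, show (i.val + 1) % 3 = 1 by omega]
    abel
  · rw [show (i - 1).val % 3 = 0 by omega, h, show (i.val + 1) % 3 = 2 by omega]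
  · rw [show (i - 1).val % 3 = 1 by omega, h, show (i.val + 1) % 3 = 0 by omega]
    abel

lemma periodic_of_sum_closedNbhd_cycleGraph (hm : 3 ≤ m) {f : Fin m → ℕ} {k : ℕ}
    (hf : ∀ i, ∑ a ∈ (cycleGraph m).closedNbhd i, f a = k) : Function.Periodic f 3 := by
  intro i
  have h1 := hf (i + 1)
  have h2 := hf (i + 2)
  rw [sum_closedNbhd_cycleGraph hm] at h1 h2
  rw [add_sub_cancel_right, show i + 1 + 1 = i + 2 by open Fin.CommRing in ring] at h1
  rw [show i + 2 - 1 = i + 1 by open Fin.CommRing in ring,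
    show i + 2 + 1 = i + 3 by open Fin.CommRing in ring] at h2
  omega

open Fin.NatCast in
lemma Function.Periodic.eq_of_coprime {γ : Type*} {f : Fin m → γ} {c : ℕ}
    (hf : Function.Periodic f (c : Fin m)) (hc : c.Coprime m) (i j : Fin m) : f i = f j := by
  obtain hm | hm := le_or_gt m 1
  · exact congrArg f ((Fin.subsingleton_iff_le_one.2 hm).elim i j)
  obtain ⟨u, -, hu⟩ := Nat.exists_mul_mod_eq_one_of_coprime hc hm
  have hunit : u • (c : Fin m) = 1 := by
    open Fin.CommRing in
    rw [nsmul_eq_mul, ← Nat.cast_mul, Fin.ext_iff, Fin.val_natCast, Fin.val_one', mul_comm, hu,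
      Nat.one_mod_eq_one.2 hm.ne']
  have h1 := (hf.nsmul u).nsmul (j - i).val i
  rwa [hunit, nsmul_one, Fin.cast_val_eq_self, add_sub_cancel, eq_comm] at h1

end CycleGraph

lemma Nat.add_mul_eq_add_mul_iff {a u v u' v' : ℕ} (hu : u < a) (hu' : u' < a) :
    u + a * v = u' + a * v' ↔ u = u' ∧ v = v' := by
  refine ⟨fun h => ?_, fun ⟨hu, hv⟩ => hu ▸ hv ▸ rfl⟩
  have ha : 0 < a := by omega
  have hmod := congrArg (· % a) h
  have hdiv := congrArg (· / a) h
  simp only [Nat.add_mul_mod_self_left, Nat.mod_eq_of_lt hu, Nat.mod_eq_of_lt hu'] at hmod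
  simp only [Nat.add_mul_div_left _ _ ha, Nat.div_eq_of_lt hu, Nat.div_eq_of_lt hu',
    zero_add] at hdiv
  exact ⟨hmod, hdiv⟩

def IsMagicTorusLabelling (m n : ℕ) (ℓ : Fin m × Fin n → ℕ) : Prop :=
  Function.Injective ℓ ∧ (∀ x, ℓ x < m * n) ∧ ∃ k, ∀ i j,
    ∑ a ∈ (cycleGraph m).closedNbhd i, ∑ b ∈ (cycleGraph n).closedNbhd j, ℓ (a, b) = k

section Torus

variable {m n : ℕ}

lemma isClosedDistanceMagic_strongProd_cycleGraph_iff (hm : 3 ≤ m) (hn : 3 ≤ n) :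
    IsClosedDistanceMagic (strongProd (cycleGraph m) (cycleGraph n)) ↔
      ∃ ℓ, IsMagicTorusLabelling m n ℓ := by
  rw [isClosedDistanceMagic_iff_exists_injective (isRegularOfDegree_strongProd
    (isRegularOfDegree_cycleGraph hm) (isRegularOfDegree_cycleGraph hn))]
  simp only [IsMagicTorusLabelling, closedNbhd_strongProd, sum_product, Fintype.card_prod,
    Fintype.card_fin, Prod.forall]

lemma IsMagicTorusLabelling.swap {ℓ : Fin m × Fin n → ℕ} (h : IsMagicTorusLabelling m n ℓ) :
    IsMagicTorusLabelling n m (ℓ ∘ Prod.swap) := by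
  obtain ⟨hinj, hlt, k, hk⟩ := h
  exact ⟨hinj.comp Prod.swap_injective, fun x => mul_comm m n ▸ hlt x.swap, k,
    fun j i => sum_comm.trans (hk i j)⟩

lemma IsMagicTorusLabelling.eq_three [NeZero m] [NeZero n] (hm : 3 ≤ m) (hn : 3 ≤ n)
    {ℓ : Fin m × Fin n → ℕ} (h : IsMagicTorusLabelling m n ℓ) (h3 : ¬ 3 ∣ n) : m = 3 := by
  obtain ⟨hinj, -, k, hk⟩ := h
  set T : Fin m → Fin n → ℕ := fun i j => ∑ a ∈ (cycleGraph m).closedNbhd i, ℓ (a, j)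
  have hT : ∀ i j, ∑ b ∈ (cycleGraph n).closedNbhd j, T i b = k :=
    fun i j => sum_comm.trans (hk i j)
  have hTconst : ∀ i j j', T i j = T i j' := by
    open Fin.NatCast in
    exact fun i => Function.Periodic.eq_of_coprime (c := 3)
      (by rw [Nat.cast_ofNat]; exact periodic_of_sum_closedNbhd_cycleGraph hn (hT i))
      ((Nat.Prime.coprime_iff_not_dvd Nat.prime_three).2 h3)
  have h3T : ∀ i, 3 * T i 0 = k := by
    intro i
    have := hT i 0
    rw [sum_closedNbhd_cycleGraph hn, hTconst i (0 - 1) 0, hTconst i (0 + 1) 0] at this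
    omega
  have hper : Function.Periodic (fun i => ℓ (i, 0)) 3 :=
    periodic_of_sum_closedNbhd_cycleGraph hm (k := T 0 0) fun i => by
      show T i 0 = T 0 0
      have := h3T i; have := h3T 0; omega
  have h30 : (3 : Fin m) = 0 := by simpa using congrArg Prod.fst (hinj (hper 0))
  rw [Fin.ext_iff, Fin.coe_ofNat_eq_mod, Fin.val_zero] at h30
  have := Nat.le_of_dvd three_pos (Nat.dvd_of_mod_eq_zero h30)
  omega

lemma isMagicTorusLabelling_add_mul {a b : ℕ} (hab : a * b = m * n) {A B : Fin m × Fin n → ℕ}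
    (hA : ∀ x, A x < a) (hB : ∀ x, B x < b) (hinj : Function.Injective fun x => (A x, B x))
    {kA kB : ℕ}
    (hkA : ∀ i j, ∑ a ∈ (cycleGraph m).closedNbhd i, ∑ b ∈ (cycleGraph n).closedNbhd j,
      A (a, b) = kA)
    (hkB : ∀ i j, ∑ a ∈ (cycleGraph m).closedNbhd i, ∑ b ∈ (cycleGraph n).closedNbhd j,
      B (a, b) = kB) :
    IsMagicTorusLabelling m n fun x => A x + a * B x := by
  refine ⟨fun x y hxy => hinj ?_, fun x => ?_, kA + a * kB, fun i j => ?_⟩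
  · obtain ⟨hAxy, hBxy⟩ := (Nat.add_mul_eq_add_mul_iff (hA x) (hA y)).1 hxy
    exact Prod.ext hAxy hBxy
  · calc A x + a * B x < a * (B x + 1) := by linarith [hA x]
      _ ≤ m * n := hab ▸ Nat.mul_le_mul_left a (hB x)
  · simp only [sum_add_distrib, ← mul_sum, hkA, hkB]

end Torus

/-- The rows `q`, `q + c` and `2c - 2q` (mod `2c + 1`) of a `3 × (2c + 1)` Kotzig array:
each row is a permutation of `{0, …, 2c}` and every column sums to `3c`. -/
def kotzig (c : ℕ) : ℕ → ℕ → ℕ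
  | 0, q => q
  | 1, q => if q ≤ c then q + c else q - (c + 1)
  | _, q => if q ≤ c then 2 * c - 2 * q else 4 * c + 1 - 2 * q

section Kotzig

variable {c r q q' : ℕ}

lemma kotzig_lt (hq : q < 2 * c + 1) : kotzig c r q < 2 * c + 1 := by
  rcases r with _ | _ | r <;> simp only [kotzig] <;> (try split_ifs) <;> omega

lemma kotzig_injOn (hq : q < 2 * c + 1) (hq' : q' < 2 * c + 1)
    (h : kotzig c r q = kotzig c r q') : q = q' := by
  rcases r with _ | _ | r <;> simp only [kotzig] at h <;> (try split_ifs at h) <;> omega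

lemma kotzig_column_sum (hq : q < 2 * c + 1) :
    kotzig c 0 q + kotzig c 1 q + kotzig c 2 q = 3 * c := by
  simp only [kotzig]; split_ifs <;> omega

end Kotzig

lemma isMagicTorusLabelling_three_odd {n : ℕ} [NeZero n] (hn : 3 ≤ n) (hodd : Odd n) :
    IsMagicTorusLabelling 3 n fun x => x.1.val + 3 * kotzig (n / 2) x.1.val x.2.val := by
  obtain ⟨c, rfl⟩ := hodd
  have hc : (2 * c + 1) / 2 = c := by omega
  rw [hc]
  refine isMagicTorusLabelling_add_mul rfl (fun x => x.1.isLt) (fun x => kotzig_lt x.2.isLt)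
    (fun x y hxy => ?_) (kA := 9) (kB := 9 * c) (fun i j => ?_) (fun i j => ?_)
  · obtain ⟨h1, h2⟩ := Prod.mk.inj hxy
    have h1' : x.1 = y.1 := Fin.ext h1
    rw [h1] at h2
    exact Prod.ext h1' (Fin.ext (kotzig_injOn x.2.isLt y.2.isLt h2))
  · simp [closedNbhd_cycleGraph_three, Fin.sum_univ_three, card_closedNbhd_cycleGraph hn]
  · rw [closedNbhd_cycleGraph_three, sum_comm]
    simp only [Fin.sum_univ_three, Fin.val_zero, Fin.val_one, Fin.val_two]
    rw [sum_congr rfl fun b _ => kotzig_column_sum b.isLt, sum_const,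
      card_closedNbhd_cycleGraph hn, smul_eq_mul]
    ring

def kotzigDigit (m x y : ℕ) : ℕ := kotzig (m / 6) (y % 3) (x / 3) + m / 3 * (x % 3)

section Constructions

variable {m n : ℕ}

lemma kotzig_lt_of_mod_six (hm : m % 6 = 3) {x : ℕ} (hx : x < m) (r : ℕ) :
    kotzig (m / 6) r (x / 3) < m / 3 := by
  have := kotzig_lt (c := m / 6) (r := r) (q := x / 3) (by omega)
  omega

lemma kotzigDigit_lt (hm : m % 6 = 3) {x : ℕ} (hx : x < m) (y : ℕ) : kotzigDigit m x y < m := by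
  have hK := kotzig_lt_of_mod_six hm hx (y % 3)
  have hres : m / 3 * (x % 3) ≤ m / 3 * 2 := Nat.mul_le_mul_left _ (by omega)
  unfold kotzigDigit
  omega

lemma sum_sum_kotzigDigit [NeZero m] [NeZero n] (hm : m % 6 = 3) (hn3 : 3 ≤ n) (hn : 3 ∣ n)
    (i : Fin m) (j : Fin n) :
    ∑ a ∈ (cycleGraph m).closedNbhd i, ∑ b ∈ (cycleGraph n).closedNbhd j,
      kotzigDigit m a b = 9 * (m / 6) + 3 * m := by
  have hinner : ∀ a : Fin m, ∑ b ∈ (cycleGraph n).closedNbhd j, kotzigDigit m a b =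
      3 * (m / 6) + 3 * (m / 3 * (a.val % 3)) := by
    intro a
    simp only [kotzigDigit, sum_add_distrib]
    rw [sum_closedNbhd_cycleGraph_mod_three hn3 hn fun r => kotzig (m / 6) r (a.val / 3),
      kotzig_column_sum (by omega), sum_const, card_closedNbhd_cycleGraph hn3, smul_eq_mul]
  rw [sum_congr rfl fun a _ => hinner a, sum_closedNbhd_cycleGraph_mod_three (by omega)
    (by omega) fun r => 3 * (m / 6) + 3 * (m / 3 * r)]
  omega

lemma isMagicTorusLabelling_kotzigDigit [NeZero m] [NeZero n] (hm : m % 6 = 3)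
    (hn : n % 6 = 3) :
    IsMagicTorusLabelling m n fun x => kotzigDigit m x.1 x.2 + m * kotzigDigit n x.2 x.1 := by
  refine isMagicTorusLabelling_add_mul rfl (fun x => kotzigDigit_lt hm x.1.isLt _)
    (fun x => kotzigDigit_lt hn x.2.isLt _) (fun x y hxy => ?_)
    (fun i j => sum_sum_kotzigDigit hm (by omega) (by omega) i j)
    (fun i j => sum_comm.trans (sum_sum_kotzigDigit hn (by omega) (by omega) j i))
  obtain ⟨h1, h2⟩ := Prod.mk.inj hxy
  simp only [kotzigDigit] at h1 h2
  obtain ⟨hK1, hr1⟩ := (Nat.add_mul_eq_add_mul_iff (kotzig_lt_of_mod_six hm x.1.isLt _)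
    (kotzig_lt_of_mod_six hm y.1.isLt _)).1 h1
  obtain ⟨hK2, hr2⟩ := (Nat.add_mul_eq_add_mul_iff (kotzig_lt_of_mod_six hn x.2.isLt _)
    (kotzig_lt_of_mod_six hn y.2.isLt _)).1 h2
  rw [hr2] at hK1
  rw [hr1] at hK2
  have hq1 := kotzig_injOn (by omega) (by omega) hK1
  have hq2 := kotzig_injOn (by omega) (by omega) hK2
  exact Prod.ext (Fin.ext (by omega)) (Fin.ext (by omega))

end Constructions

theorem stmt_13 (m n : ℕ) (hm : 3 ≤ m) (hn : 3 ≤ n) :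
    IsClosedDistanceMagic (strongProd (cycleGraph m) (cycleGraph n)) ↔
      (m % 6 = 3 ∧ n % 6 = 3) ∨ (m = 3 ∧ Odd n) ∨ (n = 3 ∧ Odd m) := by
  have : NeZero m := ⟨by omega⟩
  have : NeZero n := ⟨by omega⟩
  constructor
  · intro h
    have hodd : Odd (m * n) := by
      simpa using h.odd_card (isRegularOfDegree_strongProd (isRegularOfDegree_cycleGraph hm)
        (isRegularOfDegree_cycleGraph hn)) (by decide)
    obtain ⟨ℓ, hℓ⟩ := (isClosedDistanceMagic_strongProd_cycleGraph_iff hm hn).1 h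
    have hm3 := hℓ.eq_three hm hn
    have hn3 := hℓ.swap.eq_three hn hm
    rw [Nat.odd_mul, Nat.odd_iff, Nat.odd_iff] at hodd
    rw [Nat.odd_iff, Nat.odd_iff]
    omega
  · rw [isClosedDistanceMagic_strongProd_cycleGraph_iff hm hn]
    rintro (⟨hm6, hn6⟩ | ⟨rfl, hodd⟩ | ⟨rfl, hodd⟩)
    · exact ⟨_, isMagicTorusLabelling_kotzigDigit hm6 hn6⟩
    · exact ⟨_, isMagicTorusLabelling_three_odd hn hodd⟩
    · exact ⟨_, (isMagicTorusLabelling_three_odd hm hodd).swap⟩
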